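/- L'Hospital's monotone rule for regulated functions: Let f, g be regulated on (a,b), α strictly increasing, with D_α f and D_α g existing everywhere and D_α g of constant sign on (a,b). Assume lim_{x↑b} f^-(x) = lim_{x↑b} g^-(x) = 0 or lim_{x↓a} f^-(x) = lim_{x↓a} g^-(x) = 0. If (D_α f)/(D_α g) is increasing on (a,b), then f^- /g^- is increasing on (a,b); if (D_α f)/(D_α g) is strictly increasing, then f^- /g^- is strictly increasing. -/

import Mathlib

open Filter Topology Function Set MeasureTheory

/-- `x` lies in the interval `(a, b)` with extended-real endpoints. -/
def MemI (a b : EReal) (x : ℝ) : Prop := a < (x : EReal) ∧ (x : EReal) < b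

/-- `f` is regulated on `(a, b)`: both one-sided limits exist (as real numbers)
at every point of `(a, b)`. -/
def RegulatedOn' (f : ℝ → ℝ) (a b : EReal) : Prop :=
  ∀ x : ℝ, MemI a b x →
    (∃ L : ℝ, Tendsto f (𝓝[<] x) (𝓝 L)) ∧ ∃ R : ℝ, Tendsto f (𝓝[>] x) (𝓝 R)

/-- The symmetric `α`-derivative of `f` at `x` equals `A`:
`(D_α f)(x) = lim_{h↓0} (f⁻(x+h) - f⁺(x-h)) / (α⁻(x+h) - α⁺(x-h))`. -/
def HasDerivAlpha (f α : ℝ → ℝ) (x A : ℝ) : Prop :=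
  Tendsto (fun h : ℝ =>
      (leftLim f (x + h) - rightLim f (x - h)) /
        (leftLim α (x + h) - rightLim α (x - h)))
    (𝓝[>] (0 : ℝ)) (𝓝 A)

/-- The filter of real numbers approaching `b : EReal` from the left (`x ↑ b`). -/
noncomputable def leftFilter (b : EReal) : Filter ℝ := comap (fun x : ℝ => (x : EReal)) (𝓝[<] b)

/-- The filter of real numbers approaching `a : EReal` from the right (`x ↓ a`). -/
noncomputable def rightFilter (a : EReal) : Filter ℝ := comap (fun x : ℝ => (x : EReal)) (𝓝[>] a)

/-!
Everything rests on a monotonicity theorem for the symmetric `α`-derivative: if `D_α u ≥ 0` on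
`[x, y]` then `u⁻ x ≤ u⁻ y`, strictly if `D_α u > 0` at an interior point. When `D_α u > 0`
throughout, `u⁺ (z - η) < u⁻ (z + η)` for small `η` at every `z`, and a continuous induction on
`{t | u⁻ ≥ u⁻ x - ε on (x, t)}` reaches `y`; the general case follows by adding `δ α`.

Let `σ = ±1` be the sign of `D_α g`, `r = D_α f / D_α g` and `ρ = f⁻ / g⁻`; then
`D_α (f - c g) = D_α g (r - c)`. If the limits vanish at `a`, the theorem applied to `g` gives
`σ g⁻ > 0`, applied to `f - r t • g` on `(a, t]` it gives `ρ t ≤ r t`, and applied to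
`f - ρ x • g`, which vanishes at `x` and has `σ D_α ≥ 0` on `[x, y]`, it gives `ρ x ≤ ρ y`.
Vanishing limits at `b` are handled symmetrically.
-/

section Interval

variable {a b : EReal} {x y z : ℝ}

lemma isOpen_memI : IsOpen {x : ℝ | MemI a b x} :=
  isOpen_Ioo.preimage continuous_coe_real_ereal

lemma ordConnected_memI : OrdConnected {x : ℝ | MemI a b x} :=
  ⟨fun _ hx _ hy _ hz =>
    ⟨hx.1.trans_le (EReal.coe_le_coe_iff.2 hz.1), (EReal.coe_le_coe_iff.2 hz.2).trans_lt hy.2⟩⟩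

lemma MemI.of_mem_Icc (hx : MemI a b x) (hy : MemI a b y) (hz : z ∈ Icc x y) : MemI a b z :=
  ordConnected_memI.out hx hy hz

lemma MemI.exists_Ioc_subset (hz : MemI a b z) : ∃ p < z, Ioc p z ⊆ {x | MemI a b x} :=
  exists_Ioc_subset_of_mem_nhds (isOpen_memI.mem_nhds hz) ⟨z - 1, by linarith⟩

lemma MemI.exists_Ico_subset (hz : MemI a b z) : ∃ q > z, Ico z q ⊆ {x | MemI a b x} :=
  exists_Ico_subset_of_mem_nhds (isOpen_memI.mem_nhds hz) ⟨z + 1, by linarith⟩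

lemma tendsto_sub_nhdsGT_zero (z : ℝ) : Tendsto (fun η => z - η) (𝓝[>] 0) (𝓝[<] z) :=
  tendsto_nhdsWithin_of_tendsto_nhds_of_eventually_within _
    (by simpa using ((continuous_sub_left z).tendsto 0).mono_left nhdsWithin_le_nhds)
    (eventually_nhdsWithin_of_forall fun η (hη : 0 < η) => by simpa using hη)

lemma tendsto_add_nhdsGT_zero (z : ℝ) : Tendsto (fun η => z + η) (𝓝[>] 0) (𝓝[>] z) :=
  tendsto_nhdsWithin_of_tendsto_nhds_of_eventually_within _
    (by simpa using ((continuous_const_add z).tendsto 0).mono_left nhdsWithin_le_nhds)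
    (eventually_nhdsWithin_of_forall fun η (hη : 0 < η) => by simpa using hη)

lemma MemI.eventually_sub_add (hz : MemI a b z) :
    ∀ᶠ η in 𝓝[>] 0, MemI a b (z - η) ∧ MemI a b (z + η) :=
  have hI := isOpen_memI.mem_nhds hz
  ((tendsto_sub_nhdsGT_zero z).mono_right nhdsWithin_le_nhds).eventually hI |>.and <|
    ((tendsto_add_nhdsGT_zero z).mono_right nhdsWithin_le_nhds).eventually hI

lemma Filter.Eventually.nhdsGT_of_add {p : ℝ → Prop} (h : ∀ᶠ η in 𝓝[>] 0, p (z + η)) :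
    ∀ᶠ w in 𝓝[>] z, p w := by
  obtain ⟨δ, hδ, hsub⟩ := mem_nhdsGT_iff_exists_Ioo_subset.1 h
  filter_upwards [Ioo_mem_nhdsGT (show z < z + δ by linarith [mem_Ioi.1 hδ])] with w hw
  simpa using hsub (show w - z ∈ Ioo 0 δ from ⟨by linarith [hw.1], by linarith [hw.2]⟩)

end Interval

section OneSidedLimits

lemma tendsto_nhdsWithin_of_mapClusterPt {X Y : Type*} [TopologicalSpace X] [TopologicalSpace Y]
    [RegularSpace Y] {u g : X → Y} {s : Set X} {z : X} {L : Y} (hs : IsOpen s)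
    (hu : Tendsto u (𝓝[s] z) (𝓝 L)) (hg : ∀ᶠ y in 𝓝[s] z, MapClusterPt (g y) (𝓝 y) u) :
    Tendsto g (𝓝[s] z) (𝓝 L) := by
  refine (closed_nhds_basis L).tendsto_right_iff.2 fun V ⟨hV, hVc⟩ => ?_
  filter_upwards [eventually_eventually_nhdsWithin.2 (hu hV), hg, self_mem_nhdsWithin]
    with y hy hcl hys
  exact hVc.mem_of_mapClusterPt hcl (by rwa [nhdsWithin_eq_nhds.2 (hs.mem_nhds hys)] at hy)

variable {u : ℝ → ℝ} {z L : ℝ}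

lemma tendsto_leftLim_nhdsLT (hu : Tendsto u (𝓝[<] z) (𝓝 L)) :
    Tendsto (leftLim u) (𝓝[<] z) (𝓝 L) :=
  tendsto_nhdsWithin_of_mapClusterPt isOpen_Iio hu <| Eventually.of_forall fun y =>
    (mapClusterPt_leftLim u y).mono nhdsWithin_le_nhds

lemma tendsto_rightLim_nhdsLT (hu : Tendsto u (𝓝[<] z) (𝓝 L)) :
    Tendsto (rightLim u) (𝓝[<] z) (𝓝 L) :=
  tendsto_nhdsWithin_of_mapClusterPt isOpen_Iio hu <| Eventually.of_forall fun y =>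
    (mapClusterPt_rightLim u y).mono nhdsWithin_le_nhds

lemma tendsto_leftLim_nhdsGT (hu : Tendsto u (𝓝[>] z) (𝓝 L)) :
    Tendsto (leftLim u) (𝓝[>] z) (𝓝 L) :=
  tendsto_nhdsWithin_of_mapClusterPt isOpen_Ioi hu <| Eventually.of_forall fun y =>
    (mapClusterPt_leftLim u y).mono nhdsWithin_le_nhds

end OneSidedLimits

namespace RegulatedOn'

variable {a b : EReal} {u v : ℝ → ℝ} {z : ℝ}

lemma tendsto_nhdsLT (hu : RegulatedOn' u a b) (hz : MemI a b z) :
    Tendsto u (𝓝[<] z) (𝓝 (leftLim u z)) :=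
  tendsto_leftLim_of_tendsto (hu z hz).1

lemma tendsto_nhdsGT (hu : RegulatedOn' u a b) (hz : MemI a b z) :
    Tendsto u (𝓝[>] z) (𝓝 (rightLim u z)) :=
  tendsto_rightLim_of_tendsto (hu z hz).2

lemma const_mul (hu : RegulatedOn' u a b) (c : ℝ) : RegulatedOn' (fun t => c * u t) a b :=
  fun _ hx => ⟨⟨_, (hu.tendsto_nhdsLT hx).const_mul c⟩, ⟨_, (hu.tendsto_nhdsGT hx).const_mul c⟩⟩

lemma add (hu : RegulatedOn' u a b) (hv : RegulatedOn' v a b) :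
    RegulatedOn' (fun t => u t + v t) a b :=
  fun _ hx => ⟨⟨_, (hu.tendsto_nhdsLT hx).add (hv.tendsto_nhdsLT hx)⟩,
    ⟨_, (hu.tendsto_nhdsGT hx).add (hv.tendsto_nhdsGT hx)⟩⟩

lemma leftLim_const_mul (hu : RegulatedOn' u a b) (hz : MemI a b z) (c : ℝ) :
    leftLim (fun t => c * u t) z = c * leftLim u z :=
  leftLim_eq_of_tendsto ((hu.tendsto_nhdsLT hz).const_mul c)

lemma rightLim_const_mul (hu : RegulatedOn' u a b) (hz : MemI a b z) (c : ℝ) :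
    rightLim (fun t => c * u t) z = c * rightLim u z :=
  rightLim_eq_of_tendsto ((hu.tendsto_nhdsGT hz).const_mul c)

lemma leftLim_add (hu : RegulatedOn' u a b) (hv : RegulatedOn' v a b) (hz : MemI a b z) :
    leftLim (fun t => u t + v t) z = leftLim u z + leftLim v z :=
  leftLim_eq_of_tendsto ((hu.tendsto_nhdsLT hz).add (hv.tendsto_nhdsLT hz))

lemma rightLim_add (hu : RegulatedOn' u a b) (hv : RegulatedOn' v a b) (hz : MemI a b z) :
    rightLim (fun t => u t + v t) z = rightLim u z + rightLim v z :=
  rightLim_eq_of_tendsto ((hu.tendsto_nhdsGT hz).add (hv.tendsto_nhdsGT hz))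

lemma tendsto_leftLim_add_const_mul {F : Filter ℝ} (hu : RegulatedOn' u a b)
    (hv : RegulatedOn' v a b) (hF : ∀ᶠ s in F, MemI a b s) (c : ℝ)
    (hu0 : Tendsto (leftLim u) F (𝓝 0)) (hv0 : Tendsto (leftLim v) F (𝓝 0)) :
    Tendsto (leftLim fun t => u t + c * v t) F (𝓝 0) := by
  have h := hu0.add (hv0.const_mul c)
  rw [mul_zero, add_zero] at h
  refine h.congr' ?_
  filter_upwards [hF] with s hs
  rw [hu.leftLim_add (hv.const_mul c) hs, hv.leftLim_const_mul hs]

end RegulatedOn'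

section Integrator

variable {a b : EReal} {α : ℝ → ℝ} {x y : ℝ}

lemma MonotoneOn.regulatedOn' (hα : MonotoneOn α {x | MemI a b x}) : RegulatedOn' α a b := by
  intro z hz
  obtain ⟨p, hpz, hp⟩ := hz.exists_Ioc_subset
  obtain ⟨q, hzq, hq⟩ := hz.exists_Ico_subset
  refine ⟨⟨_, MonotoneOn.tendsto_nhdsWithin_Ioo_left (y := p) ?_ (hα.mono ?_) ⟨α z, ?_⟩⟩,
    ⟨_, MonotoneOn.tendsto_nhdsWithin_Ioo_right (y := q) ?_ (hα.mono ?_) ⟨α z, ?_⟩⟩⟩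
  · exact nonempty_Ioo.2 hpz
  · exact Ioo_subset_Ioc_self.trans hp
  · rintro _ ⟨t, ht, rfl⟩
    exact hα (hp (Ioo_subset_Ioc_self ht)) hz ht.2.le
  · exact nonempty_Ioo.2 hzq
  · exact Ioo_subset_Ico_self.trans hq
  · rintro _ ⟨t, ht, rfl⟩
    exact hα hz (hq (Ioo_subset_Ico_self ht)) ht.1.le

lemma StrictMonoOn.rightLim_lt_leftLim (hα : StrictMonoOn α {x | MemI a b x})
    (hx : MemI a b x) (hy : MemI a b y) (hxy : x < y) : rightLim α x < leftLim α y := by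
  have hreg := hα.monotoneOn.regulatedOn'
  obtain ⟨m₁, hxm₁, hm₁⟩ := exists_between hxy
  obtain ⟨m₂, hm₁₂, hm₂y⟩ := exists_between hm₁
  have hI : ∀ {t}, t ∈ Icc x y → MemI a b t := hx.of_mem_Icc hy
  calc rightLim α x ≤ α m₁ := by
        refine le_of_tendsto (hreg.tendsto_nhdsGT hx) ?_
        filter_upwards [Ioo_mem_nhdsGT hxm₁] with t ht
        exact hα.monotoneOn (hI ⟨ht.1.le, (ht.2.trans hm₁).le⟩)
          (hI ⟨hxm₁.le, hm₁.le⟩) ht.2.le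
    _ < α m₂ := hα (hI ⟨hxm₁.le, hm₁.le⟩) (hI ⟨(hxm₁.trans hm₁₂).le, hm₂y.le⟩) hm₁₂
    _ ≤ leftLim α y := by
        refine ge_of_tendsto (hreg.tendsto_nhdsLT hy) ?_
        filter_upwards [Ioo_mem_nhdsLT hm₂y] with t ht
        exact hα.monotoneOn (hI ⟨(hxm₁.trans hm₁₂).le, hm₂y.le⟩)
          (hI ⟨(hxm₁.trans (hm₁₂.trans ht.1)).le, ht.2.le⟩) ht.1.le

lemma StrictMonoOn.eventually_rightLim_sub_lt_leftLim_add (hα : StrictMonoOn α {x | MemI a b x})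
    (hz : MemI a b z) :
    ∀ᶠ η in 𝓝[>] 0, rightLim α (z - η) < leftLim α (z + η) := by
  filter_upwards [hz.eventually_sub_add, self_mem_nhdsWithin] with η hη (hη0 : 0 < η)
  exact hα.rightLim_lt_leftLim hη.1 hη.2 (by linarith)

end Integrator

namespace HasDerivAlpha

variable {a b : EReal} {u v α : ℝ → ℝ} {z A B : ℝ}

lemma const_mul (hd : HasDerivAlpha u α z A) (hu : RegulatedOn' u a b) (hz : MemI a b z)
    (c : ℝ) : HasDerivAlpha (fun t => c * u t) α z (c * A) := by
  refine (Tendsto.const_mul c hd).congr' ?_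
  filter_upwards [hz.eventually_sub_add] with η hη
  rw [hu.leftLim_const_mul hη.2, hu.rightLim_const_mul hη.1, ← mul_sub, mul_div_assoc]

lemma add (hdu : HasDerivAlpha u α z A) (hdv : HasDerivAlpha v α z B) (hu : RegulatedOn' u a b)
    (hv : RegulatedOn' v a b) (hz : MemI a b z) :
    HasDerivAlpha (fun t => u t + v t) α z (A + B) := by
  refine (Tendsto.add hdu hdv).congr' ?_
  filter_upwards [hz.eventually_sub_add] with η hη
  rw [hu.leftLim_add hv hη.2, hu.rightLim_add hv hη.1, ← add_div]
  ring_nf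

lemma eventually_mul_rightLim_lt (hd : HasDerivAlpha u α z A)
    (hα : StrictMonoOn α {x | MemI a b x}) (hz : MemI a b z) {s : ℝ} (hA : 0 < s * A) :
    ∀ᶠ η in 𝓝[>] 0, s * rightLim u (z - η) < s * leftLim u (z + η) := by
  filter_upwards [(Tendsto.const_mul s hd).eventually (eventually_gt_nhds hA),
    hα.eventually_rightLim_sub_lt_leftLim_add hz] with η hq hden
  rw [← mul_div_assoc, div_pos_iff_of_pos_right (sub_pos.2 hden), mul_sub, sub_pos] at hq
  exact hq

end HasDerivAlpha

lemma hasDerivAlpha_self {a b : EReal} {α : ℝ → ℝ} {z : ℝ} (hα : StrictMonoOn α {x | MemI a b x})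
    (hz : MemI a b z) : HasDerivAlpha α α z 1 :=
  tendsto_const_nhds.congr' <| by
    filter_upwards [hα.eventually_rightLim_sub_lt_leftLim_add hz] with η hη
    exact (div_self (sub_pos.2 hη).ne').symm

section Monotonicity

variable {a b : EReal} {u α D : ℝ → ℝ} {x y t L : ℝ}

lemma le_leftLim_of_forall_mem_Ioo (hu : RegulatedOn' u a b) (ht : MemI a b t) (hxt : x < t)
    (h : ∀ v ∈ Ioo x t, L ≤ leftLim u v) : L ≤ leftLim u t :=
  ge_of_tendsto (tendsto_leftLim_nhdsLT (hu.tendsto_nhdsLT ht)) <| by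
    filter_upwards [Ioo_mem_nhdsLT hxt] with v hv using h v hv

lemma eventually_le_rightLim_sub (hu : RegulatedOn' u a b) (hx : MemI a b x) (ht : MemI a b t)
    (hxt : x ≤ t) (hL : L < leftLim u x) (h : ∀ v ∈ Ioo x t, L ≤ leftLim u v) :
    ∀ᶠ η in 𝓝[>] 0, L ≤ rightLim u (t - η) := by
  rcases hxt.eq_or_lt with rfl | hxt
  · exact ((tendsto_rightLim_nhdsLT (hu.tendsto_nhdsLT hx)).comp
      (tendsto_sub_nhdsGT_zero x)).eventually (eventually_ge_nhds hL)
  filter_upwards [Ioo_mem_nhdsGT (sub_pos.2 hxt)] with η hη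
  have hI : MemI a b (t - η) := hx.of_mem_Icc ht ⟨by linarith [hη.2], by linarith [hη.1]⟩
  refine ge_of_tendsto (tendsto_leftLim_nhdsGT (hu.tendsto_nhdsGT hI)) ?_
  filter_upwards [Ioo_mem_nhdsGT (show t - η < t by linarith [hη.1])] with v hv
  exact h v ⟨by linarith [hη.2, hv.1], hv.2⟩

lemma leftLim_le_leftLim_of_eventually (hu : RegulatedOn' u a b) (hx : MemI a b x)
    (hy : MemI a b y) (hxy : x ≤ y)
    (h : ∀ z ∈ Icc x y, ∀ᶠ η in 𝓝[>] 0, rightLim u (z - η) ≤ leftLim u (z + η)) :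
    leftLim u x ≤ leftLim u y := by
  refine le_of_forall_pos_le_add fun ε hε => ?_
  set L := leftLim u x - ε
  -- `S` is written as an intersection of half-lines so that it is visibly closed
  set S := ⋂ v ∈ {v | x < v ∧ leftLim u v < L}, Iic v
  have memS : ∀ t, t ∈ S ↔ ∀ v ∈ Ioo x t, L ≤ leftLim u v := by
    intro t
    simp only [S, mem_iInter₂, mem_Iic, mem_ofPred_eq, mem_Ioo, and_imp]
    exact forall_congr' fun v => ⟨fun h hxv hvt => not_lt.1 fun hv => (h hxv hv).not_gt hvt,
      fun h hxv hv => not_lt.1 fun hvt => (h hxv hvt).not_gt hv⟩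
  have hgt : ∀ t ∈ S ∩ Ico x y, S ∈ 𝓝[>] t := by
    rintro t ⟨htS, hxt, hty⟩
    have htI := hx.of_mem_Icc hy ⟨hxt, hty.le⟩
    rw [memS] at htS
    have hnext : ∀ᶠ w in 𝓝[>] t, L ≤ leftLim u w := Eventually.nhdsGT_of_add <| by
      filter_upwards [eventually_le_rightLim_sub hu hx htI hxt (by linarith) htS,
        h t ⟨hxt, hty.le⟩] with η h₁ h₂ using h₁.trans h₂
    obtain ⟨c, htc, hsub⟩ := mem_nhdsGT_iff_exists_Ioo_subset.1 hnext
    filter_upwards [Ioo_mem_nhdsGT htc] with w hw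
    refine (memS w).2 fun v hv => ?_
    rcases lt_trichotomy v t with hvt | rfl | hvt
    · exact htS v ⟨hv.1, hvt⟩
    · exact le_leftLim_of_forall_mem_Ioo hu htI hv.1 htS
    · exact hsub ⟨hvt, hv.2.trans hw.2⟩
  have hyS := (memS y).1 <| ((isClosed_biInter fun v _ => isClosed_Iic).inter isClosed_Icc
    |>.Icc_subset_of_forall_mem_nhdsWithin ((memS x).2 fun v hv => (hv.1.not_gt hv.2).elim) hgt)
    ⟨hxy, le_rfl⟩
  rcases hxy.eq_or_lt with rfl | hxy
  · linarith
  linarith [le_leftLim_of_forall_mem_Ioo hu hy hxy hyS]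

lemma mul_leftLim_le_of_mul_deriv_nonneg (hα : StrictMonoOn α {x | MemI a b x})
    (hu : RegulatedOn' u a b) (hD : ∀ z, MemI a b z → HasDerivAlpha u α z (D z))
    (hx : MemI a b x) (hy : MemI a b y)
    (hxy : x ≤ y) {s : ℝ} (hs : ∀ z ∈ Icc x y, 0 ≤ s * D z) :
    s * leftLim u x ≤ s * leftLim u y := by
  have hαr := hα.monotoneOn.regulatedOn'
  -- perturb by `δ α` to make the derivative strictly positive, then let `δ → 0`
  have hpert : ∀ δ > 0,
      s * leftLim u x + δ * leftLim α x ≤ s * leftLim u y + δ * leftLim α y := by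
    intro δ hδ
    have hw := (hu.const_mul s).add (hαr.const_mul δ)
    have key := leftLim_le_leftLim_of_eventually hw hx hy hxy fun z hz => by
      have hzI := hx.of_mem_Icc hy hz
      have hd := ((hD z hzI).const_mul hu hzI s).add
        ((hasDerivAlpha_self hα hzI).const_mul hαr hzI δ) (hu.const_mul s) (hαr.const_mul δ) hzI
      filter_upwards [hd.eventually_mul_rightLim_lt hα hzI (s := 1) (by linarith [hs z hz])]
        with η hη
      linarith
    rwa [(hu.const_mul s).leftLim_add (hαr.const_mul δ) hx, hu.leftLim_const_mul hx,
      hαr.leftLim_const_mul hx, (hu.const_mul s).leftLim_add (hαr.const_mul δ) hy,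
      hu.leftLim_const_mul hy, hαr.leftLim_const_mul hy] at key
  have hlim : Tendsto (fun δ => s * leftLim u y + δ * (leftLim α y - leftLim α x)) (𝓝[>] 0)
      (𝓝 (s * leftLim u y)) := by
    simpa using ((continuous_mul_const _).const_add (s * leftLim u y)).tendsto' 0 _ (by simp)
      |>.mono_left nhdsWithin_le_nhds
  exact ge_of_tendsto hlim <| eventually_nhdsWithin_of_forall fun δ hδ => by
    linarith [hpert δ hδ]

lemma mul_leftLim_lt_of_mul_deriv_pos (hα : StrictMonoOn α {x | MemI a b x})
    (hu : RegulatedOn' u a b) (hD : ∀ z, MemI a b z → HasDerivAlpha u α z (D z))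
    (hx : MemI a b x) (hy : MemI a b y)
    {s m : ℝ} (hs : ∀ z ∈ Icc x y, 0 ≤ s * D z) (hm : m ∈ Ioo x y) (hsm : 0 < s * D m) :
    s * leftLim u x < s * leftLim u y := by
  have hmI := hx.of_mem_Icc hy (Ioo_subset_Icc_self hm)
  obtain ⟨η, hlt, hη, hηm⟩ := ((hD m hmI).eventually_mul_rightLim_lt hα hmI hsm |>.and
    (Ioo_mem_nhdsGT (lt_min (sub_pos.2 hm.1) (sub_pos.2 hm.2)))).exists
  have h₁ : η < m - x := hηm.trans_le (min_le_left _ _)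
  have h₂ : η < y - m := hηm.trans_le (min_le_right _ _)
  have hI : ∀ {z}, z ∈ Icc x y → MemI a b z := hx.of_mem_Icc hy
  have hleft : s * leftLim u x ≤ s * rightLim u (m - η) := by
    refine ge_of_tendsto ((tendsto_leftLim_nhdsGT
      (hu.tendsto_nhdsGT (hI ⟨by linarith, by linarith⟩))).const_mul s) ?_
    filter_upwards [Ioo_mem_nhdsGT (show m - η < m by linarith)] with v hv
    exact mul_leftLim_le_of_mul_deriv_nonneg hα hu hD hx
      (hI ⟨by linarith [hv.1], by linarith [hv.2]⟩) (by linarith [hv.1])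
      fun z hz => hs z ⟨hz.1, by linarith [hz.2, hv.2]⟩
  have hright : s * leftLim u (m + η) ≤ s * leftLim u y :=
    mul_leftLim_le_of_mul_deriv_nonneg hα hu hD (hI ⟨by linarith, by linarith⟩) hy (by linarith)
      fun z hz => hs z ⟨by linarith [hz.1], hz.2⟩
  linarith

end Monotonicity

section Boundary

variable {a b : EReal} {u α D : ℝ → ℝ} {t s : ℝ}

lemma rightFilter_neBot (ht : a < t) : (rightFilter a).NeBot := by
  refine comap_neBot fun S hS => ?_
  obtain ⟨c, hac, hsub⟩ := (mem_nhdsGT_iff_exists_Ioo_subset' ht).1 hS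
  obtain ⟨r, har, hrc⟩ := EReal.lt_iff_exists_real_btwn.1 hac
  exact ⟨r, hsub ⟨har, hrc⟩⟩

lemma leftFilter_neBot (ht : (t : EReal) < b) : (leftFilter b).NeBot := by
  refine comap_neBot fun S hS => ?_
  obtain ⟨c, hcb, hsub⟩ := (mem_nhdsLT_iff_exists_Ioo_subset' ht).1 hS
  obtain ⟨r, hcr, hrb⟩ := EReal.lt_iff_exists_real_btwn.1 hcb
  exact ⟨r, hsub ⟨hcr, hrb⟩⟩

lemma MemI.eventually_rightFilter (ht : MemI a b t) :
    ∀ᶠ r in rightFilter a, MemI a b r ∧ r < t :=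
  mem_of_superset (preimage_mem_comap (Ioo_mem_nhdsGT ht.1)) fun _ hr =>
    ⟨⟨hr.1, hr.2.trans ht.2⟩, EReal.coe_lt_coe_iff.1 hr.2⟩

lemma MemI.eventually_leftFilter (ht : MemI a b t) :
    ∀ᶠ r in leftFilter b, MemI a b r ∧ t < r :=
  mem_of_superset (preimage_mem_comap (Ioo_mem_nhdsLT ht.2)) fun _ hr =>
    ⟨⟨ht.1.trans hr.1, hr.2⟩, EReal.coe_lt_coe_iff.1 hr.1⟩

lemma mul_leftLim_nonneg_of_tendsto_rightFilter (hα : StrictMonoOn α {x | MemI a b x})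
    (hu : RegulatedOn' u a b) (hD : ∀ z, MemI a b z → HasDerivAlpha u α z (D z))
    (ht : MemI a b t) (hs : ∀ z, MemI a b z → z ≤ t → 0 ≤ s * D z)
    (hlim : Tendsto (leftLim u) (rightFilter a) (𝓝 0)) : 0 ≤ s * leftLim u t := by
  have := rightFilter_neBot ht.1
  refine le_of_tendsto (by simpa using hlim.const_mul s) ?_
  filter_upwards [ht.eventually_rightFilter] with r hr
  exact mul_leftLim_le_of_mul_deriv_nonneg hα hu hD hr.1 ht hr.2.le fun z hz =>
    hs z (hr.1.of_mem_Icc ht hz) hz.2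

lemma mul_leftLim_nonpos_of_tendsto_leftFilter (hα : StrictMonoOn α {x | MemI a b x})
    (hu : RegulatedOn' u a b) (hD : ∀ z, MemI a b z → HasDerivAlpha u α z (D z))
    (ht : MemI a b t) (hs : ∀ z, MemI a b z → t ≤ z → 0 ≤ s * D z)
    (hlim : Tendsto (leftLim u) (leftFilter b) (𝓝 0)) : s * leftLim u t ≤ 0 := by
  have := leftFilter_neBot ht.2
  refine ge_of_tendsto (by simpa using hlim.const_mul s) ?_
  filter_upwards [ht.eventually_leftFilter] with r hr
  exact mul_leftLim_le_of_mul_deriv_nonneg hα hu hD ht hr.1 hr.2.le fun z hz =>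
    hs z (ht.of_mem_Icc hr.1 hz) hz.1

lemma mul_leftLim_pos_of_tendsto_rightFilter (hα : StrictMonoOn α {x | MemI a b x})
    (hu : RegulatedOn' u a b) (hD : ∀ z, MemI a b z → HasDerivAlpha u α z (D z))
    (ht : MemI a b t) (hs : ∀ z, MemI a b z → 0 < s * D z)
    (hlim : Tendsto (leftLim u) (rightFilter a) (𝓝 0)) : 0 < s * leftLim u t := by
  obtain ⟨p, hpt, hp⟩ := ht.exists_Ioc_subset
  obtain ⟨q, hpq, hqt⟩ := exists_between hpt
  obtain ⟨m, hqm, hmt⟩ := exists_between hqt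
  have hq : MemI a b q := hp ⟨hpq, hqt.le⟩
  calc 0 ≤ s * leftLim u q :=
        mul_leftLim_nonneg_of_tendsto_rightFilter hα hu hD hq (fun z hz _ => (hs z hz).le) hlim
    _ < s * leftLim u t :=
        mul_leftLim_lt_of_mul_deriv_pos hα hu hD hq ht
          (fun z hz => (hs z (hq.of_mem_Icc ht hz)).le)
          ⟨hqm, hmt⟩ (hs m (hp ⟨hpq.trans hqm, hmt.le⟩))

lemma mul_leftLim_neg_of_tendsto_leftFilter (hα : StrictMonoOn α {x | MemI a b x})
    (hu : RegulatedOn' u a b) (hD : ∀ z, MemI a b z → HasDerivAlpha u α z (D z))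
    (ht : MemI a b t) (hs : ∀ z, MemI a b z → 0 < s * D z)
    (hlim : Tendsto (leftLim u) (leftFilter b) (𝓝 0)) : s * leftLim u t < 0 := by
  obtain ⟨p, htp, hp⟩ := ht.exists_Ico_subset
  obtain ⟨q, htq, hqp⟩ := exists_between htp
  obtain ⟨m, htm, hmq⟩ := exists_between htq
  have hq : MemI a b q := hp ⟨htq.le, hqp⟩
  calc s * leftLim u t < s * leftLim u q :=
        mul_leftLim_lt_of_mul_deriv_pos hα hu hD ht hq
          (fun z hz => (hs z (ht.of_mem_Icc hq hz)).le)
          ⟨htm, hmq⟩ (hs m (hp ⟨htm.le, hmq.trans hqp⟩))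
    _ ≤ 0 :=
        mul_leftLim_nonpos_of_tendsto_leftFilter hα hu hD hq (fun z hz _ => (hs z hz).le) hlim

end Boundary

section Ratio

variable {a b : EReal} {f g α Df Dg : ℝ → ℝ} {z A B : ℝ}

lemma HasDerivAlpha.add_neg_mul (hdf : HasDerivAlpha f α z A) (hdg : HasDerivAlpha g α z B)
    (hf : RegulatedOn' f a b) (hg : RegulatedOn' g a b) (hz : MemI a b z) (hB : B ≠ 0) (c : ℝ) :
    HasDerivAlpha (fun t => f t + -c * g t) α z (B * (A / B - c)) := by
  convert hdf.add (hdg.const_mul hg hz (-c)) hf (hg.const_mul (-c)) hz using 1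
  field_simp
  ring

lemma RegulatedOn'.leftLim_add_neg_mul (hf : RegulatedOn' f a b) (hg : RegulatedOn' g a b)
    (hz : MemI a b z) (hg0 : leftLim g z ≠ 0) (c : ℝ) :
    leftLim (fun t => f t + -c * g t) z = leftLim g z * (leftLim f z / leftLim g z - c) := by
  rw [hf.leftLim_add (hg.const_mul (-c)) hz, hg.leftLim_const_mul hz]
  field_simp
  ring

theorem lhopital_monotone_of_tendsto_rightFilter
    (hf : RegulatedOn' f a b) (hg : RegulatedOn' g a b)
    (hα : StrictMonoOn α {x : ℝ | MemI a b x})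
    (hDf : ∀ x : ℝ, MemI a b x → HasDerivAlpha f α x (Df x))
    (hDg : ∀ x : ℝ, MemI a b x → HasDerivAlpha g α x (Dg x))
    {σ : ℝ} (hσ : ∀ x : ℝ, MemI a b x → 0 < σ * Dg x)
    (hfa : Tendsto (leftLim f) (rightFilter a) (𝓝 0))
    (hga : Tendsto (leftLim g) (rightFilter a) (𝓝 0)) :
    (MonotoneOn (fun x => Df x / Dg x) {x : ℝ | MemI a b x} →
      MonotoneOn (fun x => leftLim f x / leftLim g x) {x : ℝ | MemI a b x}) ∧
    (StrictMonoOn (fun x => Df x / Dg x) {x : ℝ | MemI a b x} →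
      StrictMonoOn (fun x => leftLim f x / leftLim g x) {x : ℝ | MemI a b x}) := by
  have hg0 : ∀ t, MemI a b t → 0 < σ * leftLim g t := fun t ht =>
    mul_leftLim_pos_of_tendsto_rightFilter hα hg hDg ht hσ hga
  have hgap := fun c => hf.add (hg.const_mul (-c))
  have hDgap := fun c z (hz : MemI a b z) =>
    (hDf z hz).add_neg_mul (hDg z hz) hf hg hz (right_ne_zero_of_mul (hσ z hz).ne') c
  have hgapL := fun c t (ht : MemI a b t) =>
    hf.leftLim_add_neg_mul hg ht (right_ne_zero_of_mul (hg0 t ht).ne') c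
  have hle : MonotoneOn (fun x => Df x / Dg x) {x | MemI a b x} →
      ∀ t, MemI a b t → leftLim f t / leftLim g t ≤ Df t / Dg t := by
    intro hr t ht
    have key := mul_leftLim_nonneg_of_tendsto_rightFilter (s := -σ) hα (hgap (Df t / Dg t))
      (hDgap _) ht
      (fun z hz hzt => by nlinarith [hσ z hz, hr hz ht hzt])
      (hf.tendsto_leftLim_add_const_mul hg (ht.eventually_rightFilter.mono fun _ h => h.1) _
        hfa hga)
    rw [hgapL _ t ht] at key
    nlinarith [hg0 t ht]
  refine ⟨fun hr x hx y hy hxy => ?_, fun hr x hx y hy hxy => ?_⟩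
  · have key := mul_leftLim_le_of_mul_deriv_nonneg (s := σ) hα
      (hgap (leftLim f x / leftLim g x)) (hDgap _) hx hy hxy fun z hz => by
      nlinarith [hσ z (hx.of_mem_Icc hy hz), hr hx (hx.of_mem_Icc hy hz) hz.1, hle hr x hx]
    rw [hgapL _ x hx, hgapL _ y hy, sub_self, mul_zero, mul_zero] at key
    nlinarith [hg0 y hy]
  · have hm : (x + y) / 2 ∈ Ioo x y := ⟨by linarith, by linarith⟩
    have hmI := hx.of_mem_Icc hy (Ioo_subset_Icc_self hm)
    have key := mul_leftLim_lt_of_mul_deriv_pos (s := σ) hα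
      (hgap (leftLim f x / leftLim g x)) (hDgap _) hx hy
      (fun z hz => by
        nlinarith [hσ z (hx.of_mem_Icc hy hz), hr.monotoneOn hx (hx.of_mem_Icc hy hz) hz.1,
          hle hr.monotoneOn x hx])
      hm (by nlinarith [hσ _ hmI, hr hx hmI hm.1, hle hr.monotoneOn x hx])
    rw [hgapL _ x hx, hgapL _ y hy, sub_self, mul_zero, mul_zero] at key
    nlinarith [hg0 y hy]

theorem lhopital_monotone_of_tendsto_leftFilter
    (hf : RegulatedOn' f a b) (hg : RegulatedOn' g a b)
    (hα : StrictMonoOn α {x : ℝ | MemI a b x})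
    (hDf : ∀ x : ℝ, MemI a b x → HasDerivAlpha f α x (Df x))
    (hDg : ∀ x : ℝ, MemI a b x → HasDerivAlpha g α x (Dg x))
    {σ : ℝ} (hσ : ∀ x : ℝ, MemI a b x → 0 < σ * Dg x)
    (hfb : Tendsto (leftLim f) (leftFilter b) (𝓝 0))
    (hgb : Tendsto (leftLim g) (leftFilter b) (𝓝 0)) :
    (MonotoneOn (fun x => Df x / Dg x) {x : ℝ | MemI a b x} →
      MonotoneOn (fun x => leftLim f x / leftLim g x) {x : ℝ | MemI a b x}) ∧
    (StrictMonoOn (fun x => Df x / Dg x) {x : ℝ | MemI a b x} →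
      StrictMonoOn (fun x => leftLim f x / leftLim g x) {x : ℝ | MemI a b x}) := by
  have hg0 : ∀ t, MemI a b t → σ * leftLim g t < 0 := fun t ht =>
    mul_leftLim_neg_of_tendsto_leftFilter hα hg hDg ht hσ hgb
  have hgap := fun c => hf.add (hg.const_mul (-c))
  have hDgap := fun c z (hz : MemI a b z) =>
    (hDf z hz).add_neg_mul (hDg z hz) hf hg hz (right_ne_zero_of_mul (hσ z hz).ne') c
  have hgapL := fun c t (ht : MemI a b t) =>
    hf.leftLim_add_neg_mul hg ht (right_ne_zero_of_mul (hg0 t ht).ne) c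
  have hge : MonotoneOn (fun x => Df x / Dg x) {x | MemI a b x} →
      ∀ t, MemI a b t → Df t / Dg t ≤ leftLim f t / leftLim g t := by
    intro hr t ht
    have key := mul_leftLim_nonpos_of_tendsto_leftFilter (s := σ) hα (hgap (Df t / Dg t))
      (hDgap _) ht (fun z hz htz => by nlinarith [hσ z hz, hr ht hz htz])
      (hf.tendsto_leftLim_add_const_mul hg (ht.eventually_leftFilter.mono fun _ h => h.1) _
        hfb hgb)
    rw [hgapL _ t ht] at key
    nlinarith [hg0 t ht]
  refine ⟨fun hr x hx y hy hxy => ?_, fun hr x hx y hy hxy => ?_⟩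
  · have key := mul_leftLim_le_of_mul_deriv_nonneg (s := -σ) hα
      (hgap (leftLim f y / leftLim g y)) (hDgap _) hx hy hxy fun z hz => by
      nlinarith [hσ z (hx.of_mem_Icc hy hz), hr (hx.of_mem_Icc hy hz) hy hz.2, hge hr y hy]
    rw [hgapL _ x hx, hgapL _ y hy, sub_self, mul_zero, mul_zero] at key
    nlinarith [hg0 x hx]
  · have hm : (x + y) / 2 ∈ Ioo x y := ⟨by linarith, by linarith⟩
    have hmI := hx.of_mem_Icc hy (Ioo_subset_Icc_self hm)
    have key := mul_leftLim_lt_of_mul_deriv_pos (s := -σ) hα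
      (hgap (leftLim f y / leftLim g y)) (hDgap _) hx hy
      (fun z hz => by
        nlinarith [hσ z (hx.of_mem_Icc hy hz), hr.monotoneOn (hx.of_mem_Icc hy hz) hy hz.2,
          hge hr.monotoneOn y hy])
      hm (by nlinarith [hσ _ hmI, hr hmI hy hm.2, hge hr.monotoneOn y hy])
    rw [hgapL _ x hx, hgapL _ y hy, sub_self, mul_zero, mul_zero] at key
    nlinarith [hg0 x hx]

end Ratio

theorem stmt17_general (a b : EReal) (f g α : ℝ → ℝ) (Df Dg : ℝ → ℝ)
    (hf : RegulatedOn' f a b) (hg : RegulatedOn' g a b)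
    (hα : StrictMonoOn α {x : ℝ | MemI a b x})
    (hDf : ∀ x : ℝ, MemI a b x → HasDerivAlpha f α x (Df x))
    (hDg : ∀ x : ℝ, MemI a b x → HasDerivAlpha g α x (Dg x))
    (hsign : (∀ x : ℝ, MemI a b x → 0 < Dg x) ∨ (∀ x : ℝ, MemI a b x → Dg x < 0))
    (hlim : (Tendsto (leftLim f) (leftFilter b) (𝓝 0) ∧
              Tendsto (leftLim g) (leftFilter b) (𝓝 0)) ∨
            (Tendsto (leftLim f) (rightFilter a) (𝓝 0) ∧
              Tendsto (leftLim g) (rightFilter a) (𝓝 0))) :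
    (MonotoneOn (fun x => Df x / Dg x) {x : ℝ | MemI a b x} →
      MonotoneOn (fun x => leftLim f x / leftLim g x) {x : ℝ | MemI a b x}) ∧
    (StrictMonoOn (fun x => Df x / Dg x) {x : ℝ | MemI a b x} →
      StrictMonoOn (fun x => leftLim f x / leftLim g x) {x : ℝ | MemI a b x}) := by
  obtain ⟨σ, hσ⟩ : ∃ σ : ℝ, ∀ x, MemI a b x → 0 < σ * Dg x := hsign.elim
    (fun h => ⟨1, fun x hx => by simpa using h x hx⟩)
    (fun h => ⟨-1, fun x hx => by linarith [h x hx]⟩)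
  rcases hlim with ⟨hfb, hgb⟩ | ⟨hfa, hga⟩
  · exact lhopital_monotone_of_tendsto_leftFilter hf hg hα hDf hDg hσ hfb hgb
  · exact lhopital_monotone_of_tendsto_rightFilter hf hg hα hDf hDg hσ hfa hga

/-- L'Hospital's monotone rule for regulated functions. -/
theorem stmt17 (a b : EReal) (hab : a < b) (f g α : ℝ → ℝ) (Df Dg : ℝ → ℝ)
    (hf : RegulatedOn' f a b) (hg : RegulatedOn' g a b)
    (hα : StrictMonoOn α {x : ℝ | MemI a b x})
    (hDf : ∀ x : ℝ, MemI a b x → HasDerivAlpha f α x (Df x))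
    (hDg : ∀ x : ℝ, MemI a b x → HasDerivAlpha g α x (Dg x))
    (hsign : (∀ x : ℝ, MemI a b x → 0 < Dg x) ∨ (∀ x : ℝ, MemI a b x → Dg x < 0))
    (hlim : (Tendsto (leftLim f) (leftFilter b) (𝓝 0) ∧
              Tendsto (leftLim g) (leftFilter b) (𝓝 0)) ∨
            (Tendsto (leftLim f) (rightFilter a) (𝓝 0) ∧
              Tendsto (leftLim g) (rightFilter a) (𝓝 0))) :
    (MonotoneOn (fun x => Df x / Dg x) {x : ℝ | MemI a b x} →
      MonotoneOn (fun x => leftLim f x / leftLim g x) {x : ℝ | MemI a b x}) ∧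
    (StrictMonoOn (fun x => Df x / Dg x) {x : ℝ | MemI a b x} →
      StrictMonoOn (fun x => leftLim f x / leftLim g x) {x : ℝ | MemI a b x}) :=
  stmt17_general a b f g α Df Dg hf hg hα hDf hDg hsign hlim
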